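/- arXiv:0810.1936 — 2 statements merged into one kernel-verified Lean document; each statement's English description precedes it below -/
import Mathlib

section
/- Let l : ZMod n → ℤ² be toric fan data with self-intersection numbers a_i, let i ∈ ZMod n, and let d be an integer with 2 ≤ d ≤ n − 1. If det(l_i, l_{i+d}) = 1, then there exists an integer e with 1 ≤ e ≤ d − 1 such that a_{i+e} = −1. (This is the combinatorial inductive step of the Miyake–Oda proposition: if l_i and l_{i+d} form a positively oriented basis of ℤ², the rays strictly between them can be removed by a sequence of blow-downs.) -/
/-- The determinant of two vectors in `ℤ²`. -/
def det2 (u v : ℤ × ℤ) : ℤ := u.1 * v.2 - u.2 * v.1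

/-- Toric fan data: a cyclic family `l : ZMod n → ℤ²` such that each consecutive pair is a
positively oriented `ℤ`-basis of `ℤ²`, and no other `l k` lies in the nonnegative span of a
consecutive pair.  This encodes a smooth complete toric surface. -/
def IsToricFanData (n : ℕ) (l : ZMod n → ℤ × ℤ) : Prop :=
  (∀ i : ZMod n, det2 (l i) (l (i + 1)) = 1) ∧
  (∀ i k : ZMod n, k ≠ i → k ≠ i + 1 →
    ¬ ∃ α β : ℤ, 0 ≤ α ∧ 0 ≤ β ∧ l k = α • l i + β • l (i + 1))

/-!
Put `s k = det(l_i, l_{i+k})`, so `s 0 = 0`, `s 1 = 1`, `s d = 1`, and the relations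
`l_{j-1} + a_j l_j + l_{j+1} = 0` give the recurrence `s m + a_{i+m+1} s (m+1) + s (m+2) = 0`.
If `s k ≤ 0 ≤ s (k+1)` for some `0 < k < k + 1 < n`, then `l_i` would lie in the cone spanned by
`l_{i+k}` and `l_{i+k+1}`; hence `s` can never recover from a nonpositive value, and since
`s d > 0`, all of `s 1, …, s d` are positive. The recurrence then forces every `a_{i+e}` with
`0 < e < d` to be negative, and if none of them is `-1`, then `s` is convex with first increment
`1`, so that `d ≤ s d = 1`, a contradiction.
-/

lemma det2_antisymm (u v : ℤ × ℤ) : det2 u v = -det2 v u := by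
  simp only [det2]; ring

lemma det2_add_mul_add_eq_zero (u : ℤ × ℤ) {x y z : ℤ × ℤ} {c : ℤ} (h : x + c • y + z = 0) :
    det2 u x + c * det2 u y + det2 u z = 0 := by
  have h₁ : x.1 + c * y.1 + z.1 = 0 := by simpa using congrArg Prod.fst h
  have h₂ : x.2 + c * y.2 + z.2 = 0 := by simpa using congrArg Prod.snd h
  simp only [det2]
  linear_combination u.1 * h₂ - u.2 * h₁

/-- Cramer's rule in a unimodular basis. -/
lemma eq_det2_smul_add_det2_smul {u v : ℤ × ℤ} (h : det2 u v = 1) (w : ℤ × ℤ) :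
    w = det2 w v • u + det2 u w • v := by
  simp only [det2] at h ⊢
  ext
  · simp only [Prod.fst_add, Prod.smul_fst, smul_eq_mul]; linear_combination (-w.1) * h
  · simp only [Prod.snd_add, Prod.smul_snd, smul_eq_mul]; linear_combination (-w.2) * h

lemma sub_le_sub_of_add_mul_add_eq_zero {x y z c : ℤ} (hx : 0 ≤ x) (hy : 0 < y) (hz : 0 < z)
    (hc : c ≠ -1) (h : x + c * y + z = 0) : y - x ≤ z - y := by
  have hc_neg : c < 0 := by nlinarith
  have hc_le : c ≤ -2 := by omega
  nlinarith

theorem exists_eq_neg_one_of_add_mul_add_eq_zero {s c : ℕ → ℤ} {d : ℕ} (hd : 2 ≤ d)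
    (h₀ : s 0 = 0) (h₁ : s 1 = 1) (hsd : s d = 1)
    (hrec : ∀ m, s m + c (m + 1) * s (m + 1) + s (m + 2) = 0)
    (hpos : ∀ k, 1 ≤ k → k ≤ d → 0 < s k) :
    ∃ e, 1 ≤ e ∧ e ≤ d - 1 ∧ c e = -1 := by
  by_contra! hc
  have hnonneg : ∀ k ≤ d, 0 ≤ s k := fun k hk => by
    rcases Nat.eq_zero_or_pos k with rfl | hk₀
    · exact h₀.ge
    · exact (hpos k hk₀ hk).le
  have hincr : ∀ m, m + 1 ≤ d → 1 ≤ s (m + 1) - s m := by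
    intro m
    induction m with
    | zero => intro; simp [h₀, h₁]
    | succ m ih =>
      intro hm
      refine (ih (by omega)).trans (sub_le_sub_of_add_mul_add_eq_zero (hnonneg m (by omega))
        (hpos (m + 1) (by omega) (by omega)) (hpos (m + 2) (by omega) hm)
        (hc (m + 1) (by omega) (by omega)) (hrec m))
  have hlin : ∀ k ≤ d, (k : ℤ) ≤ s k := by
    intro k
    induction k with
    | zero => simp [h₀]
    | succ k ih =>
      intro hk
      have := hincr k hk
      push_cast
      linarith [ih (by omega)]
  have := hlin d le_rfl
  omega

lemma pos_of_nonpos_imp_succ_neg {s : ℕ → ℤ} {d : ℕ} (hsd : 0 < s d)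
    (hstep : ∀ k, 1 ≤ k → k < d → s k ≤ 0 → s (k + 1) < 0) :
    ∀ k, 1 ≤ k → k ≤ d → 0 < s k := by
  intro k hk hkd
  induction hkd using Nat.decreasingInduction with
  | self => exact hsd
  | of_succ k hkd ih =>
    by_contra! hsk
    exact (ih (by omega)).not_gt (hstep k hk hkd hsk)

namespace IsToricFanData

variable {n : ℕ} {l : ZMod n → ℤ × ℤ}

lemma eq_or_eq_add_one_of_det2_nonneg (hl : IsToricFanData n l) {j k : ZMod n}
    (h₁ : 0 ≤ det2 (l k) (l (j + 1))) (h₂ : 0 ≤ det2 (l j) (l k)) : k = j ∨ k = j + 1 := by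
  by_contra! hk
  exact hl.2 j k hk.1 hk.2 ⟨_, _, h₁, h₂, eq_det2_smul_add_det2_smul (hl.1 j) (l k)⟩

lemma det2_succ_neg_of_det2_nonpos (hl : IsToricFanData n l) (i : ZMod n) {k : ℕ}
    (hk : 1 ≤ k) (hkn : k + 1 < n) (hs : det2 (l i) (l (i + (k : ZMod n))) ≤ 0) :
    det2 (l i) (l (i + ((k + 1 : ℕ) : ZMod n))) < 0 := by
  have hcast_ne_zero : ∀ m : ℕ, 0 < m → m < n → (m : ZMod n) ≠ 0 := fun m hm hmn h =>
    hm.ne' (Nat.eq_zero_of_dvd_of_lt ((ZMod.natCast_eq_zero_iff m n).mp h) hmn)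
  by_contra! hs'
  rw [Nat.cast_succ, ← add_assoc] at hs'
  rcases hl.eq_or_eq_add_one_of_det2_nonneg hs' (by rw [det2_antisymm]; linarith) with h | h
  · exact hcast_ne_zero k hk (by omega) (left_eq_add.mp h)
  · rw [add_assoc, ← Nat.cast_succ] at h
    exact hcast_ne_zero (k + 1) (by omega) hkn (left_eq_add.mp h)

end IsToricFanData

theorem toric_fan_data_blowdown_between_basis_general
    (n : ℕ)
    (l : ZMod n → ℤ × ℤ) (hl : IsToricFanData n l)
    (a : ZMod n → ℤ)
    (ha : ∀ i : ZMod n, l (i - 1) + a i • l i + l (i + 1) = 0)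
    (i : ZMod n) (d : ℕ) (hd2 : 2 ≤ d) (hdn : d ≤ n - 1)
    (hdet : det2 (l i) (l (i + (d : ZMod n))) = 1) :
    ∃ e : ℕ, 1 ≤ e ∧ e ≤ d - 1 ∧ a (i + (e : ZMod n)) = -1 := by
  set s : ℕ → ℤ := fun k => det2 (l i) (l (i + (k : ZMod n)))
  have hrec (m : ℕ) : s m + a (i + ((m + 1 : ℕ) : ZMod n)) * s (m + 1) + s (m + 2) = 0 := by
    have h := ha (i + ((m + 1 : ℕ) : ZMod n))
    rw [show i + ((m + 1 : ℕ) : ZMod n) - 1 = i + (m : ZMod n) by push_cast; ring,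
      show i + ((m + 1 : ℕ) : ZMod n) + 1 = i + ((m + 2 : ℕ) : ZMod n) by push_cast; ring] at h
    exact det2_add_mul_add_eq_zero (l i) h
  have hpos : ∀ k, 1 ≤ k → k ≤ d → 0 < s k :=
    pos_of_nonpos_imp_succ_neg (by simp only [s, hdet]; norm_num)
      fun k hk hkd => hl.det2_succ_neg_of_det2_nonpos i hk (by omega)
  refine exists_eq_neg_one_of_add_mul_add_eq_zero (s := s) hd2 ?_ ?_ hdet hrec hpos
  · simp only [s, Nat.cast_zero, add_zero, det2]; ring
  · simpa only [s, Nat.cast_one] using hl.1 i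

/-- (Combinatorial Miyake–Oda blow-down step.)  For toric fan data
`l : ZMod n → ℤ²` with self-intersection numbers `a i`, if `l i` and `l (i + d)` (with
`2 ≤ d ≤ n - 1`) form a positively oriented basis of `ℤ²`, then some ray strictly between
them has self-intersection `-1`. -/
theorem toric_fan_data_blowdown_between_basis
    (n : ℕ) (hn : 3 ≤ n) [NeZero n]
    (l : ZMod n → ℤ × ℤ) (hl : IsToricFanData n l)
    (a : ZMod n → ℤ)
    (ha : ∀ i : ZMod n, l (i - 1) + a i • l i + l (i + 1) = 0)
    (i : ZMod n) (d : ℕ) (hd2 : 2 ≤ d) (hdn : d ≤ n - 1)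
    (hdet : det2 (l i) (l (i + (d : ZMod n))) = 1) :
    ∃ e : ℕ, 1 ≤ e ∧ e ≤ d - 1 ∧ a (i + (e : ZMod n)) = -1 :=
  toric_fan_data_blowdown_between_basis_general n l hl a ha i d hd2 hdn hdet
end

section
/- Let l : ZMod n → ℤ² be toric fan data with self-intersection numbers a_i. (1) (Blow-up) For any i ∈ ZMod n, the family of n + 1 vectors obtained by inserting the vector l_i + l_{i+1} between l_i and l_{i+1} is again toric fan data, and its sequence of self-intersection numbers is obtained from (a_1, …, a_n) by replacing a_i, a_{i+1} with a_i − 1, −1, a_{i+1} − 1. (2) (Blow-down) If n ≥ 4 and a_i = −1 for some i, then the family of n − 1 vectors obtained by deleting l_i is again toric fan data, and its self-intersection numbers are a_{i−1} + 1 and a_{i+1} + 1 at the two former neighbors of i, and a_j for all other j. -/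
/-- Clause (b) of `IsToricFanData` says, by definition, `l k ∉ cone (l i) (l (i + 1))`. -/
def cone (u v : ℤ × ℤ) : Set (ℤ × ℤ) := {w | ∃ α β : ℤ, 0 ≤ α ∧ 0 ≤ β ∧ w = α • u + β • v}

section Det

variable {u v w x y : ℤ × ℤ}

lemma det2_add_left : det2 (u + v) w = det2 u w + det2 v w := by
  simp only [det2, Prod.fst_add, Prod.snd_add]; ring

lemma det2_add_right : det2 u (v + w) = det2 u v + det2 u w := by
  simp only [det2, Prod.fst_add, Prod.snd_add]; ring

lemma det2_self : det2 u u = 0 := by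
  simp only [det2]; ring

lemma det2_swap : det2 v u = -det2 u v := by
  simp only [det2]; ring

lemma ne_zero_of_det2_eq_one (h : det2 u v = 1) : u ≠ 0 := by
  rintro rfl; simp [det2] at h

lemma mem_cone_iff (h : det2 u v = 1) : w ∈ cone u v ↔ 0 ≤ det2 w v ∧ 0 ≤ det2 u w := by
  constructor
  · rintro ⟨α, β, hα, hβ, rfl⟩
    simp only [det2, Prod.fst_add, Prod.snd_add, Prod.smul_fst, Prod.smul_snd,
      smul_eq_mul] at h ⊢
    constructor
    · linear_combination hα - α * h
    · linear_combination hβ - β * h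
  · rintro ⟨h₁, h₂⟩
    refine ⟨det2 w v, det2 u w, h₁, h₂, ?_⟩
    simp only [det2] at h ⊢
    ext <;> simp only [Prod.fst_add, Prod.snd_add, Prod.smul_fst, Prod.smul_snd, smul_eq_mul]
    · linear_combination (-w.1) * h
    · linear_combination (-w.2) * h

lemma cone_add_right_subset : cone u (u + v) ⊆ cone u v := by
  rintro _ ⟨α, β, hα, hβ, rfl⟩
  exact ⟨α + β, β, by positivity, hβ, by module⟩

lemma cone_add_left_subset : cone (u + v) v ⊆ cone u v := by
  rintro _ ⟨α, β, hα, hβ, rfl⟩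
  exact ⟨α, α + β, hα, by positivity, by module⟩

lemma cone_subset_union : cone u v ⊆ cone u (u + v) ∪ cone (u + v) v := by
  rintro _ ⟨α, β, hα, hβ, rfl⟩
  rcases le_total α β with h | h
  · exact Or.inr ⟨α, β - α, hα, by linarith, by module⟩
  · exact Or.inl ⟨α - β, β, by linarith, hβ, by module⟩

lemma right_notMem_cone_add_right (h : det2 u v = 1) : v ∉ cone u (u + v) := by
  rw [mem_cone_iff (by rw [det2_add_right, det2_self, h, zero_add]), det2_add_right,
    det2_self, det2_swap (u := u), h]
  omega

lemma left_notMem_cone_add_left (h : det2 u v = 1) : u ∉ cone (u + v) v := by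
  rw [mem_cone_iff (by rw [det2_add_left, det2_self, h, add_zero]), det2_add_left, det2_self,
    det2_swap (u := u), h]
  omega

lemma add_notMem_cone_ending_at (h : det2 u v = 1) (hx : det2 x u = 1) :
    u + v ∉ cone x u := by
  rw [mem_cone_iff hx, det2_add_left, det2_self, det2_swap (u := u), h]
  omega

lemma add_notMem_cone_starting_at (h : det2 u v = 1) (hy : det2 v y = 1) :
    u + v ∉ cone v y := by
  rw [mem_cone_iff hy, det2_add_right, det2_self, det2_swap (u := u), h]
  omega

lemma add_notMem_cone (h : det2 u v = 1) (hxy : det2 x y = 1) (hu : u ∉ cone x y)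
    (hv : v ∉ cone x y) (hx : x ∉ cone u v) : u + v ∉ cone x y := by
  rw [mem_cone_iff hxy] at hu hv ⊢
  rw [mem_cone_iff h] at hx
  have plucker : det2 u y * det2 x v - det2 v y * det2 x u = det2 x y * det2 u v := by
    simp only [det2]; ring
  rw [h, hxy, one_mul] at plucker
  rw [det2_swap (u := x) (v := u)] at hx
  rw [det2_add_left, det2_add_right]
  rintro ⟨h₁, h₂⟩
  rcases lt_or_ge (det2 u y) 0 with hA | hA
  · have hB : 0 < det2 v y := by linarith
    have hD : det2 x v < 0 := lt_of_not_ge fun hD => hv ⟨hB.le, hD⟩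
    have hC : 0 < det2 x u := by linarith
    nlinarith
  · have hC : det2 x u < 0 := lt_of_not_ge fun hC => hu ⟨hA, hC⟩
    exact hx ⟨by linarith, by linarith⟩

end Det

lemma eq_of_add_smul_add_eq_zero {x y u : ℤ × ℤ} {c c' : ℤ} (hu : u ≠ 0)
    (h : x + c • u + y = 0) (h' : x + c' • u + y = 0) : c = c' :=
  smul_left_injective ℤ hu (add_left_cancel (add_right_cancel (h.trans h'.symm)))

def HasSelfIntersections {n : ℕ} (l : ZMod n → ℤ × ℤ) (a : ZMod n → ℤ) : Prop :=
  ∀ i, l (i - 1) + a i • l i + l (i + 1) = 0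

namespace IsToricFanData

variable {n : ℕ} {l : ZMod n → ℤ × ℤ}

lemma ne_zero (hl : IsToricFanData n l) (i : ZMod n) : l i ≠ 0 :=
  ne_zero_of_det2_eq_one (hl.1 i)

lemma notMem_cone (hl : IsToricFanData n l) {i k : ZMod n} (hi : k ≠ i) (hi' : k ≠ i + 1) :
    l k ∉ cone (l i) (l (i + 1)) :=
  hl.2 i k hi hi'

lemma sub_one_ne_add_one (hl : IsToricFanData n l) (i : ZMod n) : i - 1 ≠ i + 1 := by
  intro h
  have h₁ := hl.1 (i - 1)
  have h₂ := hl.1 i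
  rw [sub_add_cancel] at h₁
  rw [← h, det2_swap, h₁] at h₂
  omega

end IsToricFanData

/-- `s` lists the positions of `ZMod M` inside `ZMod N` in cyclic order, skipping exactly `d`. -/
structure IsCyclicInsertion {M N : ℕ} (s : ZMod M → ZMod N) (d : ZMod N) : Prop where
  injective : Function.Injective s
  ne : ∀ p, s p ≠ d
  exists_eq : ∀ j, j ≠ d → ∃ p, s p = j
  add_one : ∀ p, s (p + 1) = if s p + 1 = d then d + 1 else s p + 1

namespace IsCyclicInsertion

variable {M N : ℕ} {s : ZMod M → ZMod N} {d : ZMod N}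

lemma one_ne_zero (hs : IsCyclicInsertion s d) : (1 : ZMod N) ≠ 0 := fun h =>
  hs.ne 0 (eq_of_zero_eq_one h.symm _ _)

lemma add_one_of_ne (hs : IsCyclicInsertion s d) {p : ZMod M} (h : s p + 1 ≠ d) :
    s (p + 1) = s p + 1 := by
  rw [hs.add_one, if_neg h]

lemma add_one_of_eq (hs : IsCyclicInsertion s d) {p : ZMod M} (h : s p + 1 = d) :
    s (p + 1) = d + 1 := by
  rw [hs.add_one, if_pos h]

lemma sub_one_of_ne (hs : IsCyclicInsertion s d) {p : ZMod M} (h : s p - 1 ≠ d) :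
    s (p - 1) = s p - 1 := by
  have hp := hs.add_one (p - 1)
  rw [sub_add_cancel] at hp
  split_ifs at hp with h'
  · exact absurd (by rw [hp, add_sub_cancel_right]) h
  · rw [hp, add_sub_cancel_right]

lemma sub_one_of_eq (hs : IsCyclicInsertion s d) {p : ZMod M} (h : s p - 1 = d) :
    s (p - 1) = d - 1 := by
  have hp := hs.add_one (p - 1)
  rw [sub_add_cancel] at hp
  split_ifs at hp with h'
  · rw [← h', add_sub_cancel_right]
  · exact absurd (by rw [← h, hp, add_sub_cancel_right]) (hs.ne (p - 1))

lemma exists_eq_sub_one (hs : IsCyclicInsertion s d) : ∃ p, s p = d - 1 ∧ s (p + 1) = d + 1 := by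
  obtain ⟨p, hp⟩ := hs.exists_eq (d - 1) (by simpa using hs.one_ne_zero)
  exact ⟨p, hp, hs.add_one_of_eq (by rw [hp, sub_add_cancel])⟩

lemma exists_eq_of_ne (hs : IsCyclicInsertion s d) {q : ZMod N} (hq : q ≠ d) (hq' : q + 1 ≠ d) :
    ∃ p, s p = q ∧ s (p + 1) = q + 1 := by
  obtain ⟨p, rfl⟩ := hs.exists_eq q hq
  exact ⟨p, rfl, hs.add_one_of_ne hq'⟩

end IsCyclicInsertion

structure IsBlowup {M N : ℕ} (L : ZMod N → ℤ × ℤ) (l : ZMod M → ℤ × ℤ) (s : ZMod M → ZMod N)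
    (d : ZMod N) : Prop where
  insertion : IsCyclicInsertion s d
  apply_comp : ∀ p, L (s p) = l p
  apply_hole : L d = L (d - 1) + L (d + 1)

namespace IsBlowup

variable {M N : ℕ} {L : ZMod N → ℤ × ℤ} {l : ZMod M → ℤ × ℤ} {s : ZMod M → ZMod N}
  {d : ZMod N}

lemma exists_neighbours (h : IsBlowup L l s d) :
    ∃ p, s p = d - 1 ∧ s (p + 1) = d + 1 ∧ L (d - 1) = l p ∧ L (d + 1) = l (p + 1) := by
  obtain ⟨p, hp, hp'⟩ := h.insertion.exists_eq_sub_one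
  exact ⟨p, hp, hp', by rw [← hp, h.apply_comp], by rw [← hp', h.apply_comp]⟩

lemma apply_add_one (h : IsBlowup L l s d) (p : ZMod M) :
    L (s p + 1) = if s p + 1 = d then l p + l (p + 1) else l (p + 1) := by
  split_ifs with hp
  · rw [hp, h.apply_hole, ← h.insertion.add_one_of_eq hp, ← hp, add_sub_cancel_right,
      h.apply_comp, h.apply_comp]
  · rw [← h.insertion.add_one_of_ne hp, h.apply_comp]

lemma apply_sub_one (h : IsBlowup L l s d) (p : ZMod M) :
    L (s p - 1) = if s p - 1 = d then l (p - 1) + l p else l (p - 1) := by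
  split_ifs with hp
  · rw [hp, h.apply_hole, ← h.insertion.sub_one_of_eq hp, ← hp, sub_add_cancel,
      h.apply_comp, h.apply_comp]
  · rw [← h.insertion.sub_one_of_ne hp, h.apply_comp]

lemma det2_eq_one (h : IsBlowup L l s d) (hl : IsToricFanData M l) (q : ZMod N) :
    det2 (L q) (L (q + 1)) = 1 := by
  obtain ⟨p₀, -, -, hu, hv⟩ := h.exists_neighbours
  by_cases hq : q = d
  · rw [hq, h.apply_hole, hu, hv, det2_add_left, det2_self, add_zero]
    exact hl.1 p₀
  by_cases hq' : q + 1 = d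
  · obtain rfl := eq_sub_of_add_eq hq'
    rw [sub_add_cancel, h.apply_hole, hu, hv, det2_add_right, det2_self, zero_add]
    exact hl.1 p₀
  obtain ⟨p, rfl, hp⟩ := h.insertion.exists_eq_of_ne hq hq'
  rw [← hp, h.apply_comp, h.apply_comp]
  exact hl.1 p

lemma notMem_cone_sub_one_hole (h : IsBlowup L l s d) (hl : IsToricFanData M l) {k : ZMod N}
    (hk : k ≠ d - 1) (hk' : k ≠ d) : L k ∉ cone (L (d - 1)) (L d) := by
  obtain ⟨p₀, hp, -, hu, hv⟩ := h.exists_neighbours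
  obtain ⟨r, rfl⟩ := h.insertion.exists_eq k hk'
  rw [h.apply_hole, hu, hv, h.apply_comp]
  by_cases hr : r = p₀ + 1
  · subst hr
    exact right_notMem_cone_add_right (hl.1 p₀)
  · exact fun hmem => hl.notMem_cone (fun e => hk (by rw [e, hp])) hr
      (cone_add_right_subset hmem)

lemma notMem_cone_hole_add_one (h : IsBlowup L l s d) (hl : IsToricFanData M l) {k : ZMod N}
    (hk : k ≠ d) (hk' : k ≠ d + 1) : L k ∉ cone (L d) (L (d + 1)) := by
  obtain ⟨p₀, -, hp', hu, hv⟩ := h.exists_neighbours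
  obtain ⟨r, rfl⟩ := h.insertion.exists_eq k hk
  rw [h.apply_hole, hu, hv, h.apply_comp]
  by_cases hr : r = p₀
  · subst hr
    exact left_notMem_cone_add_left (hl.1 r)
  · exact fun hmem => hl.notMem_cone hr (fun e => hk' (by rw [e, hp']))
      (cone_add_left_subset hmem)

lemma hole_notMem_cone (h : IsBlowup L l s d) (hl : IsToricFanData M l) {q : ZMod N}
    (hq : q ≠ d) (hq' : q + 1 ≠ d) : L d ∉ cone (L q) (L (q + 1)) := by
  obtain ⟨p₀, hp, -, hu, hv⟩ := h.exists_neighbours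
  obtain ⟨p, rfl, hsp⟩ := h.insertion.exists_eq_of_ne hq hq'
  rw [h.apply_hole, hu, hv, ← hsp, h.apply_comp, h.apply_comp]
  have hp₀ : p ≠ p₀ := fun e => hq' (by rw [e, hp, sub_add_cancel])
  by_cases h₁ : p + 1 = p₀
  · subst h₁
    exact add_notMem_cone_ending_at (hl.1 _) (hl.1 p)
  by_cases h₂ : p = p₀ + 1
  · subst h₂
    exact add_notMem_cone_starting_at (hl.1 p₀) (hl.1 _)
  exact add_notMem_cone (hl.1 p₀) (hl.1 p) (hl.notMem_cone (Ne.symm hp₀) (Ne.symm h₁))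
    (hl.notMem_cone (Ne.symm h₂) fun e => hp₀ (add_right_cancel e).symm)
    (hl.notMem_cone hp₀ h₂)

theorem isToricFanData (h : IsBlowup L l s d) (hl : IsToricFanData M l) :
    IsToricFanData N L := by
  refine ⟨h.det2_eq_one hl, fun q k hkq hkq' => ?_⟩
  change L k ∉ cone (L q) (L (q + 1))
  by_cases hq' : q + 1 = d
  · obtain rfl := eq_sub_of_add_eq hq'
    rw [sub_add_cancel] at hkq' ⊢
    exact h.notMem_cone_sub_one_hole hl hkq hkq'
  by_cases hq : q = d
  · subst hq
    exact h.notMem_cone_hole_add_one hl hkq hkq'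
  by_cases hk : k = d
  · subst hk
    exact h.hole_notMem_cone hl hq hq'
  obtain ⟨p, rfl, hsp⟩ := h.insertion.exists_eq_of_ne hq hq'
  obtain ⟨r, rfl⟩ := h.insertion.exists_eq k hk
  rw [← hsp, h.apply_comp, h.apply_comp, h.apply_comp]
  exact hl.notMem_cone (fun e => hkq (by rw [e])) (fun e => hkq' (by rw [e, hsp]))

theorem _root_.IsToricFanData.of_isBlowup (hL : IsToricFanData N L) (h : IsBlowup L l s d) :
    IsToricFanData M l := by
  refine ⟨fun p => ?_, fun p r hrp hrp' => ?_⟩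
  · by_cases hp : s p + 1 = d
    · have hdet := hL.1 (d - 1)
      rw [sub_add_cancel, h.apply_hole, det2_add_right, det2_self, zero_add,
        ← eq_sub_of_add_eq hp, ← h.insertion.add_one_of_eq hp, h.apply_comp, h.apply_comp] at hdet
      exact hdet
    · rw [← h.apply_comp, ← h.apply_comp, h.insertion.add_one_of_ne hp]
      exact hL.1 (s p)
  · change l r ∉ cone (l p) (l (p + 1))
    have hr : s r ≠ s p := h.insertion.injective.ne hrp
    have hr' : s r ≠ s (p + 1) := h.insertion.injective.ne hrp'
    rw [← h.apply_comp r, ← h.apply_comp p, ← h.apply_comp (p + 1)]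
    by_cases hp : s p + 1 = d
    · rw [h.insertion.add_one_of_eq hp] at hr' ⊢
      rw [eq_sub_of_add_eq hp] at hr ⊢
      intro hmem
      have hsplit := cone_subset_union hmem
      rw [← h.apply_hole] at hsplit
      rcases hsplit with hmem | hmem
      · have hnot := hL.notMem_cone (i := d - 1) hr
          (by rw [sub_add_cancel]; exact h.insertion.ne r)
        rw [sub_add_cancel] at hnot
        exact hnot hmem
      · exact hL.notMem_cone (h.insertion.ne r) hr' hmem
    · rw [h.insertion.add_one_of_ne hp] at hr' ⊢
      exact hL.notMem_cone hr hr'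

variable {a : ZMod M → ℤ} {A : ZMod N → ℤ}

lemma selfIntersection_hole (h : IsBlowup L l s d) (hL : IsToricFanData N L)
    (hA : HasSelfIntersections L A) : A d = -1 :=
  eq_of_add_smul_add_eq_zero (hL.ne_zero d) (hA d) (by rw [h.apply_hole]; module)

lemma selfIntersection_apply (h : IsBlowup L l s d) (hL : IsToricFanData N L)
    (ha : HasSelfIntersections l a) (hA : HasSelfIntersections L A) (p : ZMod M) :
    A (s p) = if s p = d - 1 ∨ s p = d + 1 then a p - 1 else a p := by
  have hA' := hA (s p)
  have hp : l p ≠ 0 := h.apply_comp p ▸ hL.ne_zero (s p)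
  rw [h.apply_sub_one, h.apply_comp, h.apply_add_one] at hA'
  simp only [eq_sub_iff_add_eq, ← sub_eq_iff_eq_add]
  by_cases hadd : s p + 1 = d
  · have hsub : s p - 1 ≠ d := fun e =>
      hL.sub_one_ne_add_one d (by linear_combination e - hadd)
    rw [if_pos hadd, if_neg hsub] at hA'
    rw [if_pos (Or.inl hadd)]
    exact eq_of_add_smul_add_eq_zero hp hA' (by linear_combination (norm := module) ha p)
  rw [if_neg hadd] at hA'
  by_cases hsub : s p - 1 = d
  · rw [if_pos hsub] at hA'
    rw [if_pos (Or.inr hsub)]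
    exact eq_of_add_smul_add_eq_zero hp hA' (by linear_combination (norm := module) ha p)
  rw [if_neg hsub] at hA'
  rw [if_neg (not_or.mpr ⟨hadd, hsub⟩)]
  exact eq_of_add_smul_add_eq_zero hp hA' (ha p)

end IsBlowup

lemma ZMod.val_add_one_eq_ite {K : ℕ} [NeZero K] (x : ZMod K) :
    (x + 1).val = if x.val + 1 = K then 0 else x.val + 1 := by
  have hx := ZMod.val_lt x
  rw [show x + 1 = ((x.val + 1 : ℕ) : ZMod K) by push_cast [ZMod.natCast_zmod_val]; rfl,
    ZMod.val_natCast]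
  split_ifs with h
  · rw [h, Nat.mod_self]
  · exact Nat.mod_eq_of_lt (by omega)

section SuccAboveMod

variable {M N : ℕ}

/-- The analogues on `ZMod` of `Fin.succAbove` and `Fin.predAbove`, through the representatives
`ZMod.val`. -/
def succAboveMod (d : ZMod N) (p : ZMod M) : ZMod N :=
  if p.val < d.val then (p.val : ZMod N) else ((p.val + 1 : ℕ) : ZMod N)

def predAboveMod (d j : ZMod N) : ZMod M :=
  if j.val < d.val then (j.val : ZMod M) else ((j.val - 1 : ℕ) : ZMod M)

variable [NeZero M]

lemma val_succAboveMod (hN : N = M + 1) (d : ZMod N) (p : ZMod M) :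
    (succAboveMod d p).val = if p.val < d.val then p.val else p.val + 1 := by
  have := ZMod.val_lt p
  unfold succAboveMod
  split_ifs <;> exact ZMod.val_cast_of_lt (by omega)

lemma val_predAboveMod [NeZero N] (hN : N = M + 1) (d j : ZMod N) :
    (predAboveMod d j : ZMod M).val = if j.val < d.val then j.val else j.val - 1 := by
  have := ZMod.val_lt j
  have := ZMod.val_lt d
  have := NeZero.pos M
  unfold predAboveMod
  split_ifs <;> exact ZMod.val_cast_of_lt (by omega)

lemma succAboveMod_predAboveMod [NeZero N] (hN : N = M + 1) {d j : ZMod N} (hj : j ≠ d) :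
    succAboveMod d (predAboveMod d j : ZMod M) = j := by
  rw [← (ZMod.val_injective N).ne_iff] at hj
  apply ZMod.val_injective
  rw [val_succAboveMod hN, val_predAboveMod hN]
  split_ifs <;> omega

theorem isCyclicInsertion_succAboveMod [NeZero N] (hN : N = M + 1) (d : ZMod N) :
    IsCyclicInsertion (succAboveMod d : ZMod M → ZMod N) d where
  injective p q h := by
    have := congrArg ZMod.val h
    rw [val_succAboveMod hN, val_succAboveMod hN] at this
    apply ZMod.val_injective
    split_ifs at this <;> omega
  ne p h := by
    have := congrArg ZMod.val h
    rw [val_succAboveMod hN] at this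
    split_ifs at this <;> omega
  exists_eq j hj := ⟨predAboveMod d j, succAboveMod_predAboveMod hN hj⟩
  add_one p := by
    have := ZMod.val_lt p
    have := ZMod.val_lt d
    simp only [← (ZMod.val_injective N).eq_iff, apply_ite ZMod.val, ZMod.val_add_one_eq_ite,
      val_succAboveMod hN]
    split_ifs <;> omega

end SuccAboveMod

section BlowupBlowdown

variable {n : ℕ} [NeZero n] {l : ZMod n → ℤ × ℤ} {a : ZMod n → ℤ}

theorem IsToricFanData.blowup (hl : IsToricFanData n l) (ha : HasSelfIntersections l a)
    (i : ZMod n) (l' : ZMod (n + 1) → ℤ × ℤ)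
    (hl' : ∀ j : ZMod (n + 1), l' j =
      if j.val ≤ i.val then l ((j.val : ZMod n))
      else if j.val = i.val + 1 then l i + l (i + 1)
      else l (((j.val - 1 : ℕ) : ZMod n))) :
    IsToricFanData (n + 1) l' ∧
      ∀ a' : ZMod (n + 1) → ℤ, HasSelfIntersections l' a' →
        a' ((i.val : ZMod (n + 1))) = a i - 1 ∧
        a' ((i.val : ZMod (n + 1)) + 1) = -1 ∧
        a' ((i.val : ZMod (n + 1)) + 2) = a (i + 1) - 1 ∧
        ∀ j : ZMod (n + 1),
          j ≠ (i.val : ZMod (n + 1)) → j ≠ (i.val : ZMod (n + 1)) + 1 →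
          j ≠ (i.val : ZMod (n + 1)) + 2 →
          a' j = a (if j.val ≤ i.val then ((j.val : ZMod n))
                    else (((j.val - 1 : ℕ) : ZMod n))) := by
  set d : ZMod (n + 1) := (i.val : ZMod (n + 1)) + 1
  have hd : d.val = i.val + 1 := by
    rw [ZMod.val_add_one_eq_ite, ZMod.val_cast_of_lt (by have := ZMod.val_lt i; omega),
      if_neg (by have := ZMod.val_lt i; omega)]
  have hc : (i.val : ZMod (n + 1)) = d - 1 := (add_sub_cancel_right _ _).symm
  have hs := isCyclicInsertion_succAboveMod (M := n) rfl d
  have hsi : succAboveMod d i = d - 1 := by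
    rw [succAboveMod, hd, if_pos (Nat.lt_succ_self _), hc]
  have hsi' : succAboveMod d (i + 1) = d + 1 := hs.add_one_of_eq (by rw [hsi, sub_add_cancel])
  have hcomp : ∀ p, l' (succAboveMod d p) = l p := fun p => by
    rw [hl', val_succAboveMod rfl, hd]
    split_ifs <;> first | omega | simp
  have hb : IsBlowup l' l (succAboveMod d) d :=
    { insertion := hs
      apply_comp := hcomp
      apply_hole := by
        rw [← hsi, ← hsi', hcomp, hcomp, hl', hd, if_neg (by omega), if_pos rfl] }
  have hL := hb.isToricFanData hl
  refine ⟨hL, fun a' ha' => ?_⟩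
  have happ := hb.selfIntersection_apply hL ha ha'
  simp only [hc, show d - 1 + 2 = d + 1 by ring]
  refine ⟨by rw [← hsi, happ, if_pos (Or.inl hsi)], hb.selfIntersection_hole hL ha',
    by rw [← hsi', happ, if_pos (Or.inr hsi')], fun j hj hj' hj'' => ?_⟩
  have hp : predAboveMod d j = if j.val ≤ i.val then ((j.val : ZMod n))
      else (((j.val - 1 : ℕ) : ZMod n)) := by
    simp only [predAboveMod, hd, Nat.lt_add_one_iff]
  have := happ (predAboveMod d j)
  rw [succAboveMod_predAboveMod rfl hj', if_neg (not_or.mpr ⟨hj, hj''⟩), hp] at this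
  exact this

theorem IsToricFanData.blowdown [NeZero (n - 1)] (hl : IsToricFanData n l)
    (ha : HasSelfIntersections l a) (i : ZMod n) (hai : a i = -1)
    (l'' : ZMod (n - 1) → ℤ × ℤ)
    (hl'' : ∀ j : ZMod (n - 1), l'' j =
      if j.val < i.val then l ((j.val : ZMod n))
      else l (((j.val + 1 : ℕ) : ZMod n))) :
    IsToricFanData (n - 1) l'' ∧
      ∀ a'' : ZMod (n - 1) → ℤ, HasSelfIntersections l'' a'' →
        ∀ j : ZMod n, j ≠ i →
          a'' (if j.val < i.val then ((j.val : ZMod (n - 1)))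
               else (((j.val - 1 : ℕ) : ZMod (n - 1)))) =
            if j = i - 1 ∨ j = i + 1 then a j + 1 else a j := by
  have hN : n = n - 1 + 1 := by have := NeZero.pos n; omega
  have hb : IsBlowup l l'' (succAboveMod i) i :=
    { insertion := isCyclicInsertion_succAboveMod hN i
      apply_comp := fun p => by rw [hl'', succAboveMod, apply_ite l]
      apply_hole := by
        have := ha i
        rw [hai] at this
        linear_combination (norm := module) -this }
  refine ⟨hl.of_isBlowup hb, fun a'' ha'' j hj => ?_⟩
  have := hb.selfIntersection_apply hl ha'' ha (predAboveMod i j)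
  rw [succAboveMod_predAboveMod hN hj] at this
  change a'' (predAboveMod i j) = _
  rw [this]
  split_ifs <;> ring

end BlowupBlowdown

theorem toric_fan_data_blowup_blowdown_general
    (n : ℕ) [NeZero n] [NeZero (n - 1)]
    (l : ZMod n → ℤ × ℤ) (hl : IsToricFanData n l)
    (a : ZMod n → ℤ)
    (ha : ∀ i : ZMod n, l (i - 1) + a i • l i + l (i + 1) = 0) :
    (∀ i : ZMod n, ∀ l' : ZMod (n + 1) → ℤ × ℤ,
      (∀ j : ZMod (n + 1), l' j =
        if j.val ≤ i.val then l ((j.val : ZMod n))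
        else if j.val = i.val + 1 then l i + l (i + 1)
        else l (((j.val - 1 : ℕ) : ZMod n))) →
      IsToricFanData (n + 1) l' ∧
      ∀ a' : ZMod (n + 1) → ℤ,
        (∀ j : ZMod (n + 1), l' (j - 1) + a' j • l' j + l' (j + 1) = 0) →
        a' ((i.val : ZMod (n + 1))) = a i - 1 ∧
        a' ((i.val : ZMod (n + 1)) + 1) = -1 ∧
        a' ((i.val : ZMod (n + 1)) + 2) = a (i + 1) - 1 ∧
        ∀ j : ZMod (n + 1),
          j ≠ (i.val : ZMod (n + 1)) → j ≠ (i.val : ZMod (n + 1)) + 1 →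
          j ≠ (i.val : ZMod (n + 1)) + 2 →
          a' j = a (if j.val ≤ i.val then ((j.val : ZMod n))
                    else (((j.val - 1 : ℕ) : ZMod n)))) ∧
    (4 ≤ n → ∀ i : ZMod n, a i = -1 → ∀ l'' : ZMod (n - 1) → ℤ × ℤ,
      (∀ j : ZMod (n - 1), l'' j =
        if j.val < i.val then l ((j.val : ZMod n))
        else l (((j.val + 1 : ℕ) : ZMod n))) →
      IsToricFanData (n - 1) l'' ∧
      ∀ a'' : ZMod (n - 1) → ℤ,
        (∀ j : ZMod (n - 1), l'' (j - 1) + a'' j • l'' j + l'' (j + 1) = 0) →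
        ∀ j : ZMod n, j ≠ i →
          a'' (if j.val < i.val then ((j.val : ZMod (n - 1)))
               else (((j.val - 1 : ℕ) : ZMod (n - 1)))) =
            if j = i - 1 ∨ j = i + 1 then a j + 1 else a j) :=
  ⟨hl.blowup ha, fun _ => hl.blowdown ha⟩

/-- (Equivariant blow-up and blow-down of toric fan data.)
(1) Inserting `l i + l (i+1)` between positions `i` and `i+1` yields toric fan data on
`ZMod (n+1)`, whose self-intersection numbers replace `a i, a (i+1)` by
`a i - 1, -1, a (i+1) - 1` and keep all other values.
(2) If `n ≥ 4` and `a i = -1`, deleting `l i` yields toric fan data on `ZMod (n-1)`,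
whose self-intersection numbers at the two former neighbors of `i` are
`a (i-1) + 1` and `a (i+1) + 1`, and `a j` at all other positions. -/
theorem toric_fan_data_blowup_blowdown
    (n : ℕ) (hn : 3 ≤ n) [NeZero n] [NeZero (n - 1)]
    (l : ZMod n → ℤ × ℤ) (hl : IsToricFanData n l)
    (a : ZMod n → ℤ)
    (ha : ∀ i : ZMod n, l (i - 1) + a i • l i + l (i + 1) = 0) :
    (∀ i : ZMod n, ∀ l' : ZMod (n + 1) → ℤ × ℤ,
      (∀ j : ZMod (n + 1), l' j =
        if j.val ≤ i.val then l ((j.val : ZMod n))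
        else if j.val = i.val + 1 then l i + l (i + 1)
        else l (((j.val - 1 : ℕ) : ZMod n))) →
      IsToricFanData (n + 1) l' ∧
      ∀ a' : ZMod (n + 1) → ℤ,
        (∀ j : ZMod (n + 1), l' (j - 1) + a' j • l' j + l' (j + 1) = 0) →
        a' ((i.val : ZMod (n + 1))) = a i - 1 ∧
        a' ((i.val : ZMod (n + 1)) + 1) = -1 ∧
        a' ((i.val : ZMod (n + 1)) + 2) = a (i + 1) - 1 ∧
        ∀ j : ZMod (n + 1),
          j ≠ (i.val : ZMod (n + 1)) → j ≠ (i.val : ZMod (n + 1)) + 1 →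
          j ≠ (i.val : ZMod (n + 1)) + 2 →
          a' j = a (if j.val ≤ i.val then ((j.val : ZMod n))
                    else (((j.val - 1 : ℕ) : ZMod n)))) ∧
    (4 ≤ n → ∀ i : ZMod n, a i = -1 → ∀ l'' : ZMod (n - 1) → ℤ × ℤ,
      (∀ j : ZMod (n - 1), l'' j =
        if j.val < i.val then l ((j.val : ZMod n))
        else l (((j.val + 1 : ℕ) : ZMod n))) →
      IsToricFanData (n - 1) l'' ∧
      ∀ a'' : ZMod (n - 1) → ℤ,
        (∀ j : ZMod (n - 1), l'' (j - 1) + a'' j • l'' j + l'' (j + 1) = 0) →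
        ∀ j : ZMod n, j ≠ i →
          a'' (if j.val < i.val then ((j.val : ZMod (n - 1)))
               else (((j.val - 1 : ℕ) : ZMod (n - 1)))) =
            if j = i - 1 ∨ j = i + 1 then a j + 1 else a j) :=
  toric_fan_data_blowup_blowdown_general n l hl a ha
end
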